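/- Let $v$ be a four-velocity with Minkowski normalization $M(v,v)=-1$, $0 < c \le 1$, and let $g$ be the induced metric on $\Sigma_t$ with components $g_{ab} = \{c^{-2}\delta_{ab} + (c^{-2}-1)(v_\flat)_a(v_\flat)_b\}\{c^2 - (c^2-1)(v^0)^2\}$ and inverse $(g^{-1})^{ab} = \{c^2 - (c^2-1)(v^0)^2\}^{-2}\{c^2\delta^{ab}[c^2 - (c^2-1)(v^0)^2] + c^2(c^2-1)v^a v^b\}$. Then for every $\xi \in \mathbb{R}^3$: $\{c^2\delta^{ab}[c^2-(c^2-1)(v^0)^2] + c^2(c^2-1)v^a v^b\}\xi_a\xi_b \ge c^4 |\xi|^2$; in particular $g^{-1}$ (and hence $g$) is positive definite. -/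

import Mathlib

open Finset

/-- Numerator of the inverse induced metric on `Σ_t`:
`c²δ^{ab}[c² - (c²-1)(v⁰)²] + c²(c²-1)v^a v^b`. -/
noncomputable def ginvNum (c : ℝ) (v : Fin 4 → ℝ) (a b : Fin 3) : ℝ :=
  c ^ 2 * (if a = b then 1 else 0) * (c ^ 2 - (c ^ 2 - 1) * (v 0) ^ 2) +
    c ^ 2 * (c ^ 2 - 1) * v a.succ * v b.succ

/-- The inverse induced metric `(g⁻¹)^{ab}` on constant-time slices. -/
noncomputable def ginvSp (c : ℝ) (v : Fin 4 → ℝ) (a b : Fin 3) : ℝ :=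
  ginvNum c v a b / (c ^ 2 - (c ^ 2 - 1) * (v 0) ^ 2) ^ 2

/-- The induced metric `g_{ab}` on constant-time slices. -/
noncomputable def gSp (c : ℝ) (v : Fin 4 → ℝ) (a b : Fin 3) : ℝ :=
  ((c ^ 2)⁻¹ * (if a = b then 1 else 0) + ((c ^ 2)⁻¹ - 1) * v a.succ * v b.succ) *
    (c ^ 2 - (c ^ 2 - 1) * (v 0) ^ 2)

/-!
Write `w` for the spatial part of `v` and `D = c² - (c² - 1)(v⁰)²`. All three quadratic forms
are multiples of `|ξ|²` perturbed by a multiple of `(w·ξ)²`; for the numerator of `g⁻¹`,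
subtracting `c⁴|ξ|²` leaves `c²(1 - c²)((v⁰)²|ξ|² - (w·ξ)²)`, which is nonnegative since
`(v⁰)² = 1 + |w|²` and `(w·ξ)² ≤ |w|²|ξ|²` by Cauchy–Schwarz. As `D ≥ c² > 0`, dividing by `D²`
gives positivity of `g⁻¹`, and positivity of `g` follows from `D > 0` and `c⁻² ≥ 1`.
-/

section

variable {ι : Type*} [Fintype ι]

theorem sum_sum_ite_add_mul_mul_eq [DecidableEq ι] (α β : ℝ) (x ξ : ι → ℝ) :
    ∑ a, ∑ b, (α * (if a = b then 1 else 0) + β * x a * x b) * ξ a * ξ b =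
      α * ∑ i, ξ i ^ 2 + β * (∑ i, x i * ξ i) ^ 2 := by
  simp only [add_mul, sum_add_distrib, mul_ite, mul_one, mul_zero, ite_mul, zero_mul,
    sum_ite_eq, mem_univ, if_true]
  rw [sq, sum_mul_sum, mul_sum, mul_sum]
  congr 1
  · exact sum_congr rfl fun a _ => by ring
  · refine sum_congr rfl fun a _ => ?_
    rw [mul_sum]
    exact sum_congr rfl fun b _ => by ring

theorem sum_sq_add_sq_sum_mul_le {x : ι → ℝ} {t : ℝ} (ht : t ^ 2 = 1 + ∑ i, x i ^ 2)
    (ξ : ι → ℝ) : ∑ i, ξ i ^ 2 + (∑ i, x i * ξ i) ^ 2 ≤ t ^ 2 * ∑ i, ξ i ^ 2 := by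
  rw [ht, add_mul, one_mul, add_le_add_iff_left]
  exact sum_mul_sq_le_sq_mul_sq univ x ξ

theorem sum_sq_pos {ξ : ι → ℝ} (hξ : ξ ≠ 0) : 0 < ∑ i, ξ i ^ 2 := by
  obtain ⟨i, hi⟩ := Function.ne_iff.1 hξ
  exact sum_pos' (fun j _ => sq_nonneg (ξ j)) ⟨i, mem_univ i, sq_pos_of_ne_zero hi⟩

end

theorem sq_sub_sub_one_mul_sq_pos {c : ℝ} (hc0 : 0 < c) (hc : c ^ 2 ≤ 1) (t : ℝ) :
    0 < c ^ 2 - (c ^ 2 - 1) * t ^ 2 := by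
  nlinarith [mul_nonneg (sub_nonneg.2 hc) (sq_nonneg t)]

theorem sum_sum_ginvNum_mul (c : ℝ) (v : Fin 4 → ℝ) (ξ : Fin 3 → ℝ) :
    ∑ a, ∑ b, ginvNum c v a b * ξ a * ξ b =
      c ^ 2 * (c ^ 2 - (c ^ 2 - 1) * v 0 ^ 2) * ∑ i, ξ i ^ 2 +
        c ^ 2 * (c ^ 2 - 1) * (∑ i, v i.succ * ξ i) ^ 2 := by
  rw [← sum_sum_ite_add_mul_mul_eq]
  refine sum_congr rfl fun a _ => sum_congr rfl fun b _ => ?_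
  rw [ginvNum]
  ring

theorem sum_sum_ginvSp_mul (c : ℝ) (v : Fin 4 → ℝ) (ξ : Fin 3 → ℝ) :
    ∑ a, ∑ b, ginvSp c v a b * ξ a * ξ b =
      (∑ a, ∑ b, ginvNum c v a b * ξ a * ξ b) / (c ^ 2 - (c ^ 2 - 1) * v 0 ^ 2) ^ 2 := by
  simp only [ginvSp, sum_div, div_mul_eq_mul_div]

theorem sum_sum_gSp_mul (c : ℝ) (v : Fin 4 → ℝ) (ξ : Fin 3 → ℝ) :
    ∑ a, ∑ b, gSp c v a b * ξ a * ξ b =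
      (c ^ 2 - (c ^ 2 - 1) * v 0 ^ 2) *
        ((c ^ 2)⁻¹ * ∑ i, ξ i ^ 2 + ((c ^ 2)⁻¹ - 1) * (∑ i, v i.succ * ξ i) ^ 2) := by
  rw [mul_add, ← mul_assoc, ← mul_assoc, ← sum_sum_ite_add_mul_mul_eq]
  refine sum_congr rfl fun a _ => sum_congr rfl fun b _ => ?_
  rw [gSp]
  ring

theorem pow_four_mul_sum_sq_le_sum_sum_ginvNum_mul {c : ℝ} {v : Fin 4 → ℝ} (hc : c ^ 2 ≤ 1)
    (hv : v 0 ^ 2 = 1 + ∑ i : Fin 3, v i.succ ^ 2) (ξ : Fin 3 → ℝ) :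
    c ^ 4 * ∑ i, ξ i ^ 2 ≤ ∑ a, ∑ b, ginvNum c v a b * ξ a * ξ b := by
  have hgap : 0 ≤ c ^ 2 * (1 - c ^ 2) * (v 0 ^ 2 * ∑ i, ξ i ^ 2 - (∑ i, v i.succ * ξ i) ^ 2) :=
    mul_nonneg (mul_nonneg (sq_nonneg c) (sub_nonneg.2 hc))
      (by linarith [sum_sq_add_sq_sum_mul_le hv ξ, (by positivity : 0 ≤ ∑ i, ξ i ^ 2)])
  rw [sum_sum_ginvNum_mul]
  linear_combination hgap

/-- coercivity of the induced metric on `Σ_t`: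
the numerator of the quadratic form of `g⁻¹` is bounded below by `c⁴|ξ|²`, and
both `g⁻¹` and `g` are positive definite. -/
theorem stmt2 (c : ℝ) (v : Fin 4 → ℝ) (hc0 : 0 < c) (hc1 : c ≤ 1)
    (hv : -(v 0) ^ 2 + ∑ i : Fin 3, (v i.succ) ^ 2 = -1) :
    ∀ ξ : Fin 3 → ℝ,
      (c ^ 4 * ∑ i, (ξ i) ^ 2 ≤ ∑ a, ∑ b, ginvNum c v a b * ξ a * ξ b) ∧
      (ξ ≠ 0 → 0 < ∑ a, ∑ b, ginvSp c v a b * ξ a * ξ b) ∧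
      (ξ ≠ 0 → 0 < ∑ a, ∑ b, gSp c v a b * ξ a * ξ b) := by
  intro ξ
  have hc : c ^ 2 ≤ 1 := by nlinarith
  have hv0 : v 0 ^ 2 = 1 + ∑ i : Fin 3, v i.succ ^ 2 := by linarith
  have hD := sq_sub_sub_one_mul_sq_pos hc0 hc (v 0)
  have hnum := pow_four_mul_sum_sq_le_sum_sum_ginvNum_mul hc hv0 ξ
  refine ⟨hnum, fun hξ => ?_, fun hξ => ?_⟩
  · rw [sum_sum_ginvSp_mul]
    exact div_pos ((mul_pos (by positivity) (sum_sq_pos hξ)).trans_le hnum) (by positivity)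
  · have hcinv : 1 ≤ (c ^ 2)⁻¹ := (one_le_inv₀ (by positivity)).2 hc
    rw [sum_sum_gSp_mul]
    refine mul_pos hD (add_pos_of_pos_of_nonneg ?_ ?_)
    · exact mul_pos (by positivity) (sum_sq_pos hξ)
    · exact mul_nonneg (sub_nonneg.2 hcinv) (sq_nonneg _)
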